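/- arXiv:1012.5907 — 2 statements merged into one kernel-verified Lean document; each statement's English description precedes it below -/
import Mathlib

section
/- In every 1-obstacle representation v of K*_{5,5}, for all indices i, j, k, l ∈ {1,…,5} with i, j, k, l pairwise distinct (so that {b_i, b_j, r_k, r_l} induces a K_{2,2}), the four points v(b_i), v(b_j), v(r_k), v(r_l) are in convex position and the two points v(b_i), v(b_j) appear consecutively on the boundary of their convex hull (both color classes are contiguous around the hull); equivalently, either the open segments joining v(b_i) to v(r_k) and v(b_j) to v(r_l) cross, or the open segments joining v(b_i) to v(r_l) and v(b_j) to v(r_k) cross, so the drawing of the induced K_{2,2} is a self-intersecting 'bowtie'. -/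
/-!
Write `orient a b c` for twice the signed area of `abc`. On blue points `a, b` and red points
`c, d` the obstacle `O` meets the open segments `ab` and `cd` and avoids the four bichromatic
edges. By Radon's theorem, either one of the three ways to pair the four points into two segments
crosses, or one point lies inside the triangle of the other three.

A point inside the triangle of the others, say `p` inside `abc` with `c, p` red, is impossible:
`O` meets `cp`, so the edges `ca, ap, pb, bc` trap the connected set `O` in the two triangles
`cpa` and `cpb`, which meet `ab` only at `a` and `b`. If `ab` crosses `cd`, then `c` and `d` lie
on opposite sides of `ab`, and the edges trap `O` in the triangles `abc` and `abd`. A fifth red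
point `e`, say on the side of `d`, traps `O` in `abc` and `abe` as well, and the open segment `de`,
which `O` must meet, misses the intersection of the two regions, because `d` and `e` are the
vertices of their triangles farthest from the line `ab`. Only the two crossing bichromatic
pairings remain.
-/

open Set

/-- General position: no three of the points `v p` are collinear. -/
def GenPos {V : Type*} (v : V → ℝ × ℝ) : Prop :=
  ∀ p q r : V, p ≠ q → p ≠ r → q ≠ r → ¬ Collinear ℝ ({v p, v q, v r} : Set (ℝ × ℝ))

/-- An `h`-obstacle representation of a simple graph `G`: an injective drawing
`v` of the vertices in general position, together with `h` obstacles (nonempty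
compact connected sets), each obstacle avoiding every closed edge segment and
every vertex point, such that every non-edge's open segment meets some obstacle. -/
structure ObstacleRep {V : Type*} (G : SimpleGraph V) (h : ℕ) where
  v : V → ℝ × ℝ
  inj : Function.Injective v
  genpos : GenPos v
  obs : Fin h → Set (ℝ × ℝ)
  obs_compact : ∀ i, IsCompact (obs i)
  obs_connected : ∀ i, IsConnected (obs i)
  obs_avoid_edges : ∀ i, ∀ p q : V, G.Adj p q → Disjoint (obs i) (segment ℝ (v p) (v q))
  obs_avoid_vertices : ∀ i, ∀ p : V, v p ∉ obs i
  blocks : ∀ p q : V, p ≠ q → ¬ G.Adj p q →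
    ∃ i, ((obs i) ∩ openSegment ℝ (v p) (v q)).Nonempty

/-- `K*_{m,n}`: the complete bipartite graph `K_{m,n}` minus a maximum matching.
`b i = Sum.inl i` is adjacent to `r j = Sum.inr j` iff `i ≠ j` (as naturals). -/
def KStarGraph (m n : ℕ) : SimpleGraph (Fin m ⊕ Fin n) where
  Adj x y := match x, y with
    | Sum.inl i, Sum.inr j => (i : ℕ) ≠ (j : ℕ)
    | Sum.inr j, Sum.inl i => (i : ℕ) ≠ (j : ℕ)
    | _, _ => False
  symm := by constructor; rintro (i|i) (j|j) h <;> simp_all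
  loopless := by constructor; rintro (i|i) h <;> simp_all

/-- Twice the signed area of the triangle `abc`. -/
def orient (a b c : ℝ × ℝ) : ℝ :=
  (b.1 - a.1) * (c.2 - a.2) - (b.2 - a.2) * (c.1 - a.1)

section Orient

variable {a b c : ℝ × ℝ}

lemma orient_rotate (a b c : ℝ × ℝ) : orient b c a = orient a b c := by
  unfold orient; ring

@[simp] lemma orient_self_left (a b : ℝ × ℝ) : orient a b a = 0 := by
  unfold orient; ring

@[simp] lemma orient_self_right (a b : ℝ × ℝ) : orient a b b = 0 := by
  unfold orient; ring

lemma orient_smul_add_smul (a b u v : ℝ × ℝ) {s t : ℝ} (h : s + t = 1) :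
    orient a b (s • u + t • v) = s * orient a b u + t * orient a b v := by
  obtain rfl : t = 1 - s := by linarith
  simp only [orient, Prod.fst_add, Prod.snd_add, Prod.smul_fst, Prod.smul_snd, smul_eq_mul]
  ring

lemma orient_add_orient_add_orient (a b c w : ℝ × ℝ) :
    orient b c w + orient c a w + orient a b w = orient a b c := by
  unfold orient; ring

/-- Cramer's rule: `orient b c w`, `orient c a w`, `orient a b w` are the barycentric
coordinates of `w` with respect to `a, b, c`, scaled by `orient a b c`. -/
lemma orient_smul_eq (a b c w : ℝ × ℝ) :
    orient a b c • w = orient b c w • a + orient c a w • b + orient a b w • c := by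
  ext <;> simp only [orient, Prod.fst_add, Prod.snd_add, Prod.smul_fst, Prod.smul_snd,
    smul_eq_mul] <;> ring

lemma continuous_orient (a b : ℝ × ℝ) : Continuous (orient a b) := by
  unfold orient; fun_prop

lemma concaveOn_orient_mul (a b : ℝ × ℝ) (k : ℝ) :
    ConcaveOn ℝ univ fun w => orient a b w * k := by
  refine ⟨convex_univ, fun u _ v _ s t _ _ hst => ?_⟩
  simp only [smul_eq_mul, orient_smul_add_smul a b u v hst]
  exact le_of_eq (by ring)

lemma collinear_of_orient_eq_zero (h : orient a b c = 0) : Collinear ℝ {a, b, c} := by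
  rcases eq_or_ne a b with rfl | hab
  · simpa using collinear_pair ℝ a c
  have hn : 0 < (b.1 - a.1) ^ 2 + (b.2 - a.2) ^ 2 := by
    by_contra hle
    exact hab (Prod.ext (by nlinarith) (by nlinarith))
  set r := ((c.1 - a.1) * (b.1 - a.1) + (c.2 - a.2) * (b.2 - a.2)) /
    ((b.1 - a.1) ^ 2 + (b.2 - a.2) ^ 2)
  have hc : c = AffineMap.lineMap a b r := by
    unfold orient at h
    ext <;> simp only [AffineMap.lineMap_apply_module, Prod.fst_add, Prod.snd_add,
      Prod.smul_fst, Prod.smul_snd, smul_eq_mul, r] <;> field_simp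
    · linear_combination -(b.2 - a.2) * h
    · linear_combination (b.1 - a.1) * h
  have := collinear_insert_of_mem_affineSpan_pair
    (hc ▸ AffineMap.lineMap_mem_affineSpan_pair r a b : c ∈ line[ℝ, a, b])
  rwa [insert_comm c a, pair_comm c b] at this

end Orient

lemma GenPos.orient_ne_zero {V : Type*} {v : V → ℝ × ℝ} (hv : GenPos v) {p q r : V}
    (hpq : p ≠ q) (hpr : p ≠ r) (hqr : q ≠ r) : orient (v p) (v q) (v r) ≠ 0 :=
  fun h => hv p q r hpq hpr hqr (collinear_of_orient_eq_zero h)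

lemma GenPos.restrict_four {V : Type*} {v : V → ℝ × ℝ} (hv : GenPos v) {p q r s : V}
    (h : [p, q, r, s].Nodup) : GenPos ![v p, v q, v r, v s] := by
  have hinj : Function.Injective ![p, q, r, s] := by
    have hget : ![p, q, r, s] = [p, q, r, s].get := by funext t; fin_cases t <;> rfl
    rw [hget]
    exact List.nodup_iff_injective_get.1 h
  intro x y z hxy hxz hyz
  have hcomp : ![v p, v q, v r, v s] = v ∘ ![p, q, r, s] := by
    funext t; fin_cases t <;> rfl
  rw [hcomp]
  exact hv _ _ _ (hinj.ne hxy) (hinj.ne hxz) (hinj.ne hyz)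

lemma mul_pos_of_mul_neg_of_mul_neg {a b c : ℝ} (hab : a * b < 0) (hbc : b * c < 0) :
    0 < a * c := by
  nlinarith [mul_pos_of_neg_of_neg hab hbc, sq_nonneg b]

section Triangle

variable {a b c p u v w x y : ℝ × ℝ}

lemma isOpen_setOf_orient_mul_pos (a b : ℝ × ℝ) (k : ℝ) :
    IsOpen {w | 0 < orient a b w * k} :=
  isOpen_lt continuous_const ((continuous_orient a b).mul continuous_const)

lemma mem_convexHull_triple_iff (h : orient a b c ≠ 0) :
    w ∈ convexHull ℝ {a, b, c} ↔ 0 ≤ orient b c w * orient a b c ∧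
      0 ≤ orient c a w * orient a b c ∧ 0 ≤ orient a b w * orient a b c := by
  set S := orient a b c
  constructor
  · have hconv : Convex ℝ
        {w | 0 ≤ orient b c w * S ∧ 0 ≤ orient c a w * S ∧ 0 ≤ orient a b w * S} := by
      simpa only [mem_univ, true_and, ofPred_and] using
        ((concaveOn_orient_mul b c S).convex_ge 0).inter
          (((concaveOn_orient_mul c a S).convex_ge 0).inter
            ((concaveOn_orient_mul a b S).convex_ge 0))
    refine fun hw => convexHull_min ?_ hconv hw
    have hca : orient c a b = S := (orient_rotate b c a).trans (orient_rotate a b c)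
    rintro _ (rfl | rfl | rfl) <;>
      simp [orient_rotate, hca, S, mul_self_nonneg]
  · rintro ⟨h₁, h₂, h₃⟩
    have hw :
        w = (orient b c w / S) • a + (orient c a w / S) • b + (orient a b w / S) • c := by
      rw [div_eq_inv_mul, div_eq_inv_mul, div_eq_inv_mul, mul_smul, mul_smul, mul_smul,
        ← smul_add, ← smul_add, ← orient_smul_eq, inv_smul_smul₀ h]
    have hnonneg : ∀ t, 0 ≤ t * S → 0 ≤ t / S := fun t ht => by
      rw [← mul_div_mul_right t S h]; exact div_nonneg ht (mul_self_nonneg S)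
    rw [hw]
    have := (convex_convexHull ℝ {a, b, c}).sum_mem (t := Finset.univ)
      (w := ![orient b c w / S, orient c a w / S, orient a b w / S]) (z := ![a, b, c])
      (by simp [Fin.forall_fin_succ, hnonneg _ h₁, hnonneg _ h₂, hnonneg _ h₃])
      (by simp [Fin.sum_univ_three, ← add_div, orient_add_orient_add_orient, S, h])
      (fun i _ => subset_convexHull ℝ _ (by fin_cases i <;> simp))
    simpa [Fin.sum_univ_three] using this

lemma mem_segment_of_orient_eq_zero (h : orient a b c ≠ 0) (hw : w ∈ convexHull ℝ {a, b, c})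
    (h0 : orient a b w = 0) : w ∈ segment ℝ a b := by
  rw [pair_comm b c, insert_comm a c, convexHull_insert (insert_nonempty _ _),
    convexHull_pair, convexJoin_singleton_left, mem_iUnion₂] at hw
  obtain ⟨z, hz, s, t, hs, ht, hst, rfl⟩ := hw
  obtain ⟨α, β, hα, hβ, hαβ, rfl⟩ := hz
  rw [orient_smul_add_smul _ _ _ _ hst, orient_smul_add_smul _ _ _ _ hαβ] at h0
  simp only [orient_self_left, orient_self_right, mul_zero, add_zero] at h0
  obtain rfl : s = 0 := (mul_eq_zero.1 h0).resolve_right h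
  rw [zero_smul, zero_add, show t = 1 by linarith, one_smul]
  exact ⟨α, β, hα, hβ, hαβ, rfl⟩

/-- `p` lies strictly inside the triangle `abc`: each barycentric coordinate of `p` has the sign
of `orient a b c`. -/
def InTriangle (p a b c : ℝ × ℝ) : Prop :=
  0 < orient b c p * orient a b c ∧ 0 < orient c a p * orient a b c ∧
    0 < orient a b p * orient a b c

lemma InTriangle.mem_interior_convexHull (h : InTriangle p a b c) :
    p ∈ interior (convexHull ℝ {a, b, c}) := by
  have hS : orient a b c ≠ 0 := right_ne_zero_of_mul h.1.ne'
  refine mem_interior.2 ⟨{w | InTriangle w a b c}, fun w hw => ?_, ?_, h⟩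
  · exact (mem_convexHull_triple_iff hS).2 ⟨hw.1.le, hw.2.1.le, hw.2.2.le⟩
  · exact (isOpen_setOf_orient_mul_pos _ _ _).and
      ((isOpen_setOf_orient_mul_pos _ _ _).and (isOpen_setOf_orient_mul_pos _ _ _))

lemma openSegment_subset_interior_union (huv : orient x y u * orient x y v < 0) :
    openSegment ℝ x y ⊆ interior (convexHull ℝ {x, y, u} ∪ convexHull ℝ {x, y, v}) := by
  set Su := orient x y u
  set Sv := orient x y v
  have hu : Su ≠ 0 := left_ne_zero_of_mul huv.ne
  have hv : Sv ≠ 0 := right_ne_zero_of_mul huv.ne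
  have hrot : ∀ z, orient y z x = orient x y z := fun z => orient_rotate x y z
  have hrot' : ∀ z, orient z x y = orient x y z := fun z => (orient_rotate y z x).trans (hrot z)
  rintro w ⟨s, t, hs, ht, hst, rfl⟩
  refine mem_interior.2 ⟨{z | 0 < orient y u z * Su ∧ 0 < orient u x z * Su ∧
    0 < orient y v z * Sv ∧ 0 < orient v x z * Sv}, fun z hz => ?_, ?_, ?_⟩
  · rcases le_or_gt 0 (orient x y z * Su) with hz' | hz'
    · exact Or.inl ((mem_convexHull_triple_iff hu).2 ⟨hz.1.le, hz.2.1.le, hz'⟩)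
    · exact Or.inr ((mem_convexHull_triple_iff hv).2
        ⟨hz.2.2.1.le, hz.2.2.2.le, (mul_pos_of_mul_neg_of_mul_neg hz' huv).le⟩)
  · exact (isOpen_setOf_orient_mul_pos _ _ _).and ((isOpen_setOf_orient_mul_pos _ _ _).and
      ((isOpen_setOf_orient_mul_pos _ _ _).and (isOpen_setOf_orient_mul_pos _ _ _)))
  · simp only [mem_ofPred_eq, orient_smul_add_smul _ _ _ _ hst, orient_self_left,
      orient_self_right, hrot, hrot', mul_zero, zero_add, add_zero]
    refine ⟨?_, ?_, ?_, ?_⟩ <;> nlinarith [mul_self_pos.2 hu, mul_self_pos.2 hv]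

lemma mem_interior_union_of_mem_convexHull (huv : orient x y u * orient x y v < 0)
    (hw : w ∈ convexHull ℝ {x, y, u}) (hxu : w ∉ segment ℝ x u)
    (hyu : w ∉ segment ℝ y u) :
    w ∈ interior (convexHull ℝ {x, y, u} ∪ convexHull ℝ {x, y, v}) := by
  have hu : orient x y u ≠ 0 := left_ne_zero_of_mul huv.ne
  obtain ⟨h₁, h₂, h₃⟩ := (mem_convexHull_triple_iff hu).1 hw
  rcases h₃.eq_or_lt with h₃ | h₃
  · have hxy := mem_segment_of_orient_eq_zero hu hw (mul_eq_zero.1 h₃.symm |>.resolve_right hu)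
    refine openSegment_subset_interior_union huv (mem_openSegment_of_ne_left_right ?_ ?_ hxy)
    · rintro rfl; exact hxu (left_mem_segment ℝ _ u)
    · rintro rfl; exact hyu (left_mem_segment ℝ _ u)
  have hu' : orient y u x ≠ 0 := by rwa [orient_rotate]
  have hu'' : orient u x y ≠ 0 := by rwa [orient_rotate, orient_rotate]
  rcases h₁.eq_or_lt with h₁ | h₁
  · refine absurd (mem_segment_of_orient_eq_zero hu' ?_ ?_) hyu
    · rwa [insert_comm x y, pair_comm x u] at hw
    · exact (mul_eq_zero.1 h₁.symm).resolve_right hu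
  rcases h₂.eq_or_lt with h₂ | h₂
  · refine absurd (segment_symm ℝ u x ▸ mem_segment_of_orient_eq_zero hu'' ?_ ?_) hxu
    · rwa [pair_comm y u, insert_comm x u] at hw
    · exact (mul_eq_zero.1 h₂.symm).resolve_right hu
  exact interior_mono subset_union_left (InTriangle.mem_interior_convexHull ⟨h₁, h₂, h₃⟩)

end Triangle

lemma IsPreconnected.subset_of_inter_subset_interior {X : Type*} [TopologicalSpace X]
    {O K : Set X} (hO : IsPreconnected O) (hK : IsClosed K) (hmeet : (O ∩ K).Nonempty)
    (h : O ∩ K ⊆ interior K) : O ⊆ K := by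
  obtain ⟨z, hz⟩ := hmeet
  refine (hO.subset_of_closure_inter_subset isOpen_interior ⟨z, hz.1, h hz⟩ ?_).trans
    interior_subset
  exact fun w ⟨hwK, hwO⟩ => h ⟨hwO, closure_minimal interior_subset hK hwK⟩

lemma IsPreconnected.subset_union_convexHull {O : Set (ℝ × ℝ)} {x y u v : ℝ × ℝ}
    (hO : IsPreconnected O) (huv : orient x y u * orient x y v < 0)
    (hmeet : (O ∩ (convexHull ℝ {x, y, u} ∪ convexHull ℝ {x, y, v})).Nonempty)
    (hxu : Disjoint O (segment ℝ x u)) (hyu : Disjoint O (segment ℝ y u))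
    (hxv : Disjoint O (segment ℝ x v)) (hyv : Disjoint O (segment ℝ y v)) :
    O ⊆ convexHull ℝ {x, y, u} ∪ convexHull ℝ {x, y, v} := by
  refine hO.subset_of_inter_subset_interior (((toFinite _).isClosed_convexHull (𝕜 := ℝ)).union
    ((toFinite _).isClosed_convexHull (𝕜 := ℝ))) hmeet ?_
  rintro w ⟨hwO, hw | hw⟩
  · exact mem_interior_union_of_mem_convexHull huv hw (disjoint_left.1 hxu hwO)
      (disjoint_left.1 hyu hwO)
  · rw [union_comm]
    exact mem_interior_union_of_mem_convexHull (by rwa [mul_comm]) hw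
      (disjoint_left.1 hxv hwO) (disjoint_left.1 hyv hwO)

lemma ConcaveOn.lt_of_mem_convexHull {E : Type*} [AddCommGroup E] [Module ℝ E] {g : E → ℝ}
    (hg : ConcaveOn ℝ univ g) {s : Set E} {x y : E} (hs : ∀ z ∈ s, z ≠ x → g x < g z)
    (hy : y ∈ convexHull ℝ s) (hyx : y ≠ x) : g x < g y := by
  have hsub : s ⊆ insert x {z | g x < g z} := fun z hz => (eq_or_ne z x).imp id (hs z hz)
  replace hy := convexHull_mono hsub hy
  rcases eq_empty_or_nonempty {z | g x < g z} with he | hne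
  · rw [he, insert_empty_eq, convexHull_singleton] at hy
    exact absurd hy hyx
  have hconv : Convex ℝ {z | g x < g z} := by simpa using hg.convex_gt (g x)
  rw [convexHull_insert hne, hconv.convexHull_eq, convexJoin_singleton_left, mem_iUnion₂] at hy
  obtain ⟨z, hz, α, β, hα, hβ, hαβ, rfl⟩ := hy
  have hβ : 0 < β := hβ.lt_of_ne <| by
    rintro rfl; rw [add_zero] at hαβ; subst hαβ; simp at hyx
  calc g x = α * g x + β * g x := by rw [← add_mul, hαβ, one_mul]
    _ < α * g x + β * g z := by gcongr; exact hz
    _ ≤ g (α • x + β • z) := hg.2 trivial trivial hα hβ.le hαβ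

section Sides

variable {a b c d : ℝ × ℝ}

lemma openSegment_inter_nonempty_of_orient (hab : orient a b c * orient a b d < 0)
    (hcd : orient c d a * orient c d b < 0) :
    (openSegment ℝ a b ∩ openSegment ℝ c d).Nonempty := by
  set p := orient c d a
  set q := orient c d b
  set r := orient a b c
  set s := orient a b d
  have hqp : q - p ≠ 0 := fun h => by
    rw [sub_eq_zero.1 h] at hcd; nlinarith [mul_self_nonneg p]
  have hrs : r - s = q - p := by simp only [p, q, r, s, orient]; ring
  refine ⟨(q - p)⁻¹ • (q • a - p • b), mem_openSegment_iff_div.2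
    ⟨q * (q - p), -p * (q - p), by nlinarith [sq_nonneg q], by nlinarith [sq_nonneg p], ?_⟩,
    mem_openSegment_iff_div.2
      ⟨-s * (r - s), r * (r - s), by nlinarith [sq_nonneg s], by nlinarith [sq_nonneg r], ?_⟩⟩
  · have h2 : q * (q - p) + -p * (q - p) = (q - p) * (q - p) := by ring
    rw [h2]
    ext <;> simp only [Prod.smul_fst, Prod.smul_snd, Prod.fst_add, Prod.snd_add, Prod.fst_sub,
      Prod.snd_sub, smul_eq_mul] <;> field_simp <;> ring
  · have h2 : -s * (r - s) + r * (r - s) = (r - s) * (r - s) := by ring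
    rw [h2, hrs]
    ext <;> simp only [p, q, r, s, orient, Prod.smul_fst, Prod.smul_snd, Prod.fst_add,
      Prod.snd_add, Prod.fst_sub, Prod.snd_sub, smul_eq_mul] <;> field_simp <;> ring

lemma orient_mul_orient_neg_of_crossing (hc : orient a b c ≠ 0)
    (h : (openSegment ℝ a b ∩ openSegment ℝ c d).Nonempty) :
    orient a b c * orient a b d < 0 := by
  obtain ⟨x, ⟨α, β, -, -, hαβ, rfl⟩, ⟨s, t, hs, ht, hst, hx⟩⟩ := h
  have h0 := congrArg (orient a b) hx
  rw [orient_smul_add_smul _ _ _ _ hst, orient_smul_add_smul _ _ _ _ hαβ] at h0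
  simp only [orient_self_left, orient_self_right, mul_zero, add_zero] at h0
  have key : t * (orient a b c * orient a b d) = -(s * (orient a b c * orient a b c)) := by
    linear_combination orient a b c * h0
  nlinarith [mul_pos hs (mul_self_pos.2 hc)]

end Sides

/-- Radon's theorem for four points in general position. -/
theorem GenPos.crossing_or_inTriangle {a b c d : ℝ × ℝ} (h : GenPos ![a, b, c, d]) :
    (openSegment ℝ a c ∩ openSegment ℝ b d).Nonempty ∨
      (openSegment ℝ a d ∩ openSegment ℝ b c).Nonempty ∨
      (openSegment ℝ a b ∩ openSegment ℝ c d).Nonempty ∨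
      InTriangle d a b c ∨ InTriangle c a b d ∨ InTriangle b c d a ∨ InTriangle a c d b := by
  have hS : orient a b c ≠ 0 := h.orient_ne_zero (p := 0) (q := 1) (r := 2) (by decide)
    (by decide) (by decide)
  have hA : orient b c d * orient a b c ≠ 0 := mul_ne_zero
    (h.orient_ne_zero (p := 1) (q := 2) (r := 3) (by decide) (by decide) (by decide)) hS
  have hB : orient c a d * orient a b c ≠ 0 := mul_ne_zero
    (h.orient_ne_zero (p := 2) (q := 0) (r := 3) (by decide) (by decide) (by decide)) hS
  have hC : orient a b d * orient a b c ≠ 0 := mul_ne_zero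
    (h.orient_ne_zero (p := 0) (q := 1) (r := 3) (by decide) (by decide) (by decide)) hS
  have hsum := orient_add_orient_add_orient a b c d
  obtain ⟨e₁, e₂, e₃, e₄, e₅, e₆, e₇, e₈, e₉, e₁₀, e₁₁, e₁₂⟩ :
      orient a d b = -orient a b d ∧ orient a d c = orient c a d ∧
      orient b c a = orient a b c ∧ orient a c b = -orient a b c ∧
      orient a c d = -orient c a d ∧ orient b d a = orient a b d ∧
      orient b d c = -orient b c d ∧ orient c d a = -orient c a d ∧
      orient c d b = orient b c d ∧ orient d b a = -orient a b d ∧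
      orient d a c = -orient c a d ∧ orient d a b = orient a b d := by
    unfold orient; refine ⟨?_, ?_, ?_, ?_, ?_, ?_, ?_, ?_, ?_, ?_, ?_, ?_⟩ <;> ring
  have hS2 := mul_self_pos.2 hS
  -- Signs of the barycentric coordinates of `d` relative to `orient a b c`: one negative sign
  -- puts `d` across an edge of `abc` (a crossing), two put the opposite vertex inside the triangle
  -- of the others, three are impossible since the coordinates sum to `orient a b c`.
  rcases hA.lt_or_gt with hA | hA <;> rcases hB.lt_or_gt with hB | hB <;>
    rcases hC.lt_or_gt with hC | hC
  · nlinarith [congrArg (· * orient a b c) hsum]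
  · refine Or.inr <| Or.inr <| Or.inr <| Or.inr <| Or.inl ⟨?_, ?_, ?_⟩ <;>
      (try simp only [e₇, e₁₁]) <;> nlinarith
  · refine Or.inr <| Or.inr <| Or.inr <| Or.inr <| Or.inr <| Or.inl ⟨?_, ?_, ?_⟩ <;>
      (try simp only [e₈, e₁₂, e₄, e₉]) <;> nlinarith
  · refine Or.inr <| Or.inl <| openSegment_inter_nonempty_of_orient ?_ ?_ <;>
      (try simp only [e₁, e₂, e₃]) <;> nlinarith
  · refine Or.inr <| Or.inr <| Or.inr <| Or.inr <| Or.inr <| Or.inr ⟨?_, ?_, ?_⟩ <;>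
      (try simp only [e₉, e₁₀, e₃, e₈]) <;> nlinarith
  · refine Or.inl <| openSegment_inter_nonempty_of_orient ?_ ?_ <;>
      (try simp only [e₄, e₅, e₆, e₇]) <;> nlinarith
  · refine Or.inr <| Or.inr <| Or.inl <| openSegment_inter_nonempty_of_orient ?_ ?_ <;>
      (try simp only [e₈, e₉]) <;> nlinarith
  · exact Or.inr <| Or.inr <| Or.inr <| Or.inl ⟨hA, hB, hC⟩

/-- The vertex `x` is the unique point of the triangle `a b x` farthest from the line `ab`. -/
lemma orient_mul_lt_of_mem_convexHull {a b x y : ℝ × ℝ} (hx : orient a b x ≠ 0)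
    (hy : y ∈ convexHull ℝ {a, b, x}) (hyx : y ≠ x) :
    orient a b y * orient a b x < orient a b x * orient a b x := by
  have := (concaveOn_orient_mul a b (-orient a b x)).lt_of_mem_convexHull ?_ hy hyx
  · linarith
  · rintro z (rfl | rfl | rfl) hz
    · simpa using mul_self_pos.2 hx
    · simpa using mul_self_pos.2 hx
    · exact absurd rfl hz

lemma openSegment_disjoint_inter_union_convexHull {a b c d e : ℝ × ℝ}
    (hcd : orient a b c * orient a b d < 0) (hce : orient a b c * orient a b e < 0)
    (hde : d ≠ e) :
    Disjoint (openSegment ℝ d e) ((convexHull ℝ {a, b, c} ∪ convexHull ℝ {a, b, d}) ∩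
      (convexHull ℝ {a, b, c} ∪ convexHull ℝ {a, b, e})) := by
  have hc : orient a b c ≠ 0 := left_ne_zero_of_mul hcd.ne
  have hd : orient a b d ≠ 0 := right_ne_zero_of_mul hcd.ne
  have he : orient a b e ≠ 0 := right_ne_zero_of_mul hce.ne
  refine disjoint_left.2 fun y hy ⟨hyd, hye⟩ => ?_
  have hyd' : y ≠ d := fun h => hde (left_mem_openSegment_iff.1 (h ▸ hy))
  have hye' : y ≠ e := fun h => hde (right_mem_openSegment_iff.1 (h ▸ hy))
  obtain ⟨s, t, hs, ht, hst, rfl⟩ := hy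
  have hfy := orient_smul_add_smul a b d e hst
  have hnot : s • d + t • e ∉ convexHull ℝ {a, b, c} := fun h => by
    have := ((mem_convexHull_triple_iff hc).1 h).2.2
    rw [hfy] at this
    nlinarith
  have h₁ := orient_mul_lt_of_mem_convexHull hd (hyd.resolve_left hnot) hyd'
  have h₂ := orient_mul_lt_of_mem_convexHull he (hye.resolve_left hnot) hye'
  rw [hfy] at h₁ h₂
  obtain rfl : s = 1 - t := by linarith
  have k₁ : orient a b d * (orient a b e - orient a b d) < 0 := by nlinarith
  have k₂ : orient a b e * (orient a b d - orient a b e) < 0 := by nlinarith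
  have hde := mul_pos_of_mul_neg_of_mul_neg (by rwa [mul_comm] at hcd) hce
  nlinarith [mul_pos_of_neg_of_neg k₁ k₂,
    mul_nonneg hde.le (sq_nonneg (orient a b d - orient a b e))]

/-- What a single obstacle `O` satisfies on an induced `K_{2,2}` with parts `{a, b}` and
`{c, d}`. -/
structure IsK22Obstacle (O : Set (ℝ × ℝ)) (a b c d : ℝ × ℝ) : Prop where
  meets_ab : (O ∩ openSegment ℝ a b).Nonempty
  meets_cd : (O ∩ openSegment ℝ c d).Nonempty
  disjoint_ac : Disjoint O (segment ℝ a c)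
  disjoint_ad : Disjoint O (segment ℝ a d)
  disjoint_bc : Disjoint O (segment ℝ b c)
  disjoint_bd : Disjoint O (segment ℝ b d)

namespace IsK22Obstacle

variable {O : Set (ℝ × ℝ)} {a b c d e p : ℝ × ℝ}

lemma swap_right (h : IsK22Obstacle O a b c d) : IsK22Obstacle O a b d c :=
  ⟨h.meets_ab, openSegment_symm ℝ c d ▸ h.meets_cd, h.disjoint_ad, h.disjoint_ac,
    h.disjoint_bd, h.disjoint_bc⟩

lemma symm (h : IsK22Obstacle O a b c d) : IsK22Obstacle O c d a b :=
  ⟨h.meets_cd, h.meets_ab, segment_symm ℝ a c ▸ h.disjoint_ac,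
    segment_symm ℝ b c ▸ h.disjoint_bc, segment_symm ℝ a d ▸ h.disjoint_ad,
    segment_symm ℝ b d ▸ h.disjoint_bd⟩

lemma subset_union_convexHull (hO : IsPreconnected O) (h : IsK22Obstacle O a b c d)
    (hcd : orient a b c * orient a b d < 0) :
    O ⊆ convexHull ℝ {a, b, c} ∪ convexHull ℝ {a, b, d} := by
  obtain ⟨y, hyO, hy⟩ := h.meets_ab
  exact hO.subset_union_convexHull hcd
    ⟨y, hyO, Or.inl
      (segment_subset_convexHull (by simp) (by simp) (openSegment_subset_segment _ _ _ hy))⟩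
    h.disjoint_ac h.disjoint_bc h.disjoint_ad h.disjoint_bd

theorem not_inTriangle (hO : IsPreconnected O) (h : IsK22Obstacle O a b c p) :
    ¬ InTriangle p a b c := by
  rintro ⟨hbc, hca, hab⟩
  set S := orient a b c
  have hS : S ≠ 0 := right_ne_zero_of_mul hab.ne'
  have hsides : orient c p a * orient c p b < 0 := by
    have e : orient c p a = -orient c a p := by unfold orient; ring
    rw [e, orient_rotate b c p]
    nlinarith [mul_pos hca hbc, mul_self_nonneg S]
  obtain ⟨x, hxO, hx⟩ := h.meets_cd
  have hK := hO.subset_union_convexHull hsides ⟨x, hxO, Or.inl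
      (segment_subset_convexHull (by simp) (by simp) (openSegment_subset_segment _ _ _ hx))⟩
    (segment_symm ℝ a c ▸ h.disjoint_ac) (segment_symm ℝ a p ▸ h.disjoint_ad)
    (segment_symm ℝ b c ▸ h.disjoint_bc) (segment_symm ℝ b p ▸ h.disjoint_bd)
  obtain ⟨y, hyO, hy⟩ := h.meets_ab
  have hne : a ≠ b := by rintro rfl; exact hS (by simp only [S, orient]; ring)
  have hy0 : orient a b y * S = 0 := by
    obtain ⟨s, t, -, -, hst, rfl⟩ := hy
    simp [orient_smul_add_smul _ _ _ _ hst]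
  have hgc : 0 < orient a b c * S := mul_self_pos.2 hS
  rcases hK hyO with hy' | hy'
  · refine (concaveOn_orient_mul a b S).lt_of_mem_convexHull (x := a) ?_ hy'
      (fun hya => hne (left_mem_openSegment_iff.1 (hya ▸ hy))) |>.ne ?_
    · rintro z (rfl | rfl | rfl) hz <;> simp_all
    · simp [hy0]
  · refine (concaveOn_orient_mul a b S).lt_of_mem_convexHull (x := b) ?_ hy'
      (fun hyb => hne (right_mem_openSegment_iff.1 (hyb ▸ hy))) |>.ne ?_
    · rintro z (rfl | rfl | rfl) hz <;> simp_all
    · simp [hy0]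

theorem bowtie_or_crossing (hO : IsPreconnected O) (hgen : GenPos ![a, b, c, d])
    (h : IsK22Obstacle O a b c d) :
    (openSegment ℝ a c ∩ openSegment ℝ b d).Nonempty ∨
      (openSegment ℝ a d ∩ openSegment ℝ b c).Nonempty ∨
      (openSegment ℝ a b ∩ openSegment ℝ c d).Nonempty := by
  rcases hgen.crossing_or_inTriangle with h₁ | h₂ | h₃ | hd | hc | hb | ha
  · exact Or.inl h₁
  · exact Or.inr (Or.inl h₂)
  · exact Or.inr (Or.inr h₃)
  · exact absurd hd (h.not_inTriangle hO)
  · exact absurd hc (h.swap_right.not_inTriangle hO)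
  · exact absurd hb (h.symm.not_inTriangle hO)
  · exact absurd ha (h.symm.swap_right.not_inTriangle hO)

theorem orient_mul_orient_pos (hO : IsPreconnected O) (hcd : IsK22Obstacle O a b c d)
    (hce : IsK22Obstacle O a b c e) (hde : IsK22Obstacle O a b d e) (hc : orient a b c ≠ 0)
    (hd : orient a b d ≠ 0) (he : orient a b e ≠ 0) (hce_ne : c ≠ e) (hde_ne : d ≠ e) :
    0 < orient a b c * orient a b d := by
  refine lt_of_le_of_ne ?_ (mul_ne_zero hc hd).symm
  by_contra! hsides
  wlog hside : 0 < orient a b d * orient a b e generalizing c d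
  · refine this hcd.swap_right hde hce hd hc hde_ne hce_ne (by rwa [mul_comm]) ?_
    exact mul_pos_of_mul_neg_of_mul_neg hsides
      (lt_of_le_of_ne (not_lt.1 hside) (mul_ne_zero hd he))
  have hsides' : orient a b c * orient a b e < 0 := by
    nlinarith [mul_neg_of_neg_of_pos hsides hside, mul_self_nonneg (orient a b d)]
  obtain ⟨y, hyO, hy⟩ := hde.meets_cd
  exact disjoint_left.1 (openSegment_disjoint_inter_union_convexHull hsides hsides' hde_ne) hy
    ⟨hcd.subset_union_convexHull hO hsides hyO, hce.subset_union_convexHull hO hsides' hyO⟩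

end IsK22Obstacle

lemma ObstacleRep.isK22Obstacle {n : ℕ} (rep : ObstacleRep (KStarGraph n n) 1)
    {x y z w : Fin n} (hxy : x ≠ y) (hzw : z ≠ w) (hxz : x ≠ z) (hxw : x ≠ w)
    (hyz : y ≠ z) (hyw : y ≠ w) :
    IsK22Obstacle (rep.obs 0) (rep.v (.inl x)) (rep.v (.inl y)) (rep.v (.inr z))
      (rep.v (.inr w)) := by
  have meets : ∀ p q, p ≠ q → ¬ (KStarGraph n n).Adj p q →
      (rep.obs 0 ∩ openSegment ℝ (rep.v p) (rep.v q)).Nonempty := fun p q hpq hadj => by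
    obtain ⟨i, hi⟩ := rep.blocks p q hpq hadj
    rwa [Subsingleton.elim i 0] at hi
  have avoids : ∀ {p q : Fin n}, p ≠ q →
      Disjoint (rep.obs 0) (segment ℝ (rep.v (.inl p)) (rep.v (.inr q))) :=
    fun hpq => rep.obs_avoid_edges 0 _ _ (Fin.val_ne_of_ne hpq)
  exact ⟨meets _ _ (by simpa) id, meets _ _ (by simpa) id, avoids hxz, avoids hxw, avoids hyz,
    avoids hyw⟩

/-- in every 1-obstacle representation of `K*_{5,5}`, every induced
`K_{2,2}` (on `b_i, b_j, r_k, r_l` with `i, j, k, l` pairwise distinct) is drawn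
as a self-intersecting bowtie: one of the two pairings of open segments crosses. -/
theorem kstar55_bowtie (rep : ObstacleRep (KStarGraph 5 5) 1)
    (i j k l : Fin 5) (hij : i ≠ j) (hik : i ≠ k) (hil : i ≠ l)
    (hjk : j ≠ k) (hjl : j ≠ l) (hkl : k ≠ l) :
    (∃ x, x ∈ openSegment ℝ (rep.v (Sum.inl i)) (rep.v (Sum.inr k)) ∧
          x ∈ openSegment ℝ (rep.v (Sum.inl j)) (rep.v (Sum.inr l))) ∨
    (∃ x, x ∈ openSegment ℝ (rep.v (Sum.inl i)) (rep.v (Sum.inr l)) ∧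
          x ∈ openSegment ℝ (rep.v (Sum.inl j)) (rep.v (Sum.inr k))) := by
  obtain ⟨m, -, hm⟩ := Finset.exists_mem_notMem_of_card_lt_card
    (Finset.card_le_four.trans_lt (by simp) :
      ({i, j, k, l} : Finset (Fin 5)).card < Finset.univ.card)
  simp only [Finset.mem_insert, Finset.mem_singleton, not_or] at hm
  obtain ⟨hmi, hmj, hmk, hml⟩ := hm
  have hO := (rep.obs_connected 0).isPreconnected
  have hCD := rep.isK22Obstacle hij hkl hik hil hjk hjl
  have ho : ∀ r, orient (rep.v (.inl i)) (rep.v (.inl j)) (rep.v (.inr r)) ≠ 0 := fun r =>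
    rep.genpos.orient_ne_zero (by simpa) Sum.inl_ne_inr Sum.inl_ne_inr
  rcases hCD.bowtie_or_crossing hO (rep.genpos.restrict_four (by simp [*])) with h | h | h
  · exact Or.inl h
  · exact Or.inr h
  · have hCE := rep.isK22Obstacle hij (Ne.symm hmk) hik (Ne.symm hmi) hjk (Ne.symm hmj)
    have hDE := rep.isK22Obstacle hij (Ne.symm hml) hil (Ne.symm hmi) hjl (Ne.symm hmj)
    have hsame := hCD.orient_mul_orient_pos hO hCE hDE (ho k) (ho l) (ho m)
      (rep.inj.ne (by simpa using Ne.symm hmk)) (rep.inj.ne (by simpa using Ne.symm hml))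
    exact (lt_asymm (orient_mul_orient_neg_of_crossing (ho k) h) hsame).elim
end

section
/- For every integer k ≥ 4 and every h-obstacle representation v of CE(k): if for some subset A ⊆ {1,…,k} the point v(r_A) is dangerous for A with respect to the points v(b_1),…,v(b_k), then h ≥ 2 (at least two obstacles are involved). -/
open Set

/-- The graph `CE(k)`: a clique `b_1, …, b_k` (`Sum.inl`) together with an
independent set `{r_A : A ⊆ [k]}` (`Sum.inr`), where `b_i ~ r_A` iff `i ∈ A`. -/
def CE (k : ℕ) : SimpleGraph (Fin k ⊕ Finset (Fin k)) where
  Adj x y := match x, y with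
    | Sum.inl i, Sum.inl j => i ≠ j
    | Sum.inl i, Sum.inr A => i ∈ A
    | Sum.inr A, Sum.inl i => i ∈ A
    | Sum.inr _, Sum.inr _ => False
  symm := by constructor; rintro (i|A) (j|B) h <;> simp_all [ne_comm, eq_comm]
  loopless := by constructor; rintro (i|A) h <;> simp_all

/-- The ray from `q` through `p`. -/
def Ray (q p : ℝ × ℝ) : Set (ℝ × ℝ) := {x | ∃ t : ℝ, 0 ≤ t ∧ x = q + t • (p - q)}

/-- A point `p` is dangerous for `A` w.r.t. the points `b i`: there are distinct
`i₁, i₂ ∈ A` and distinct `i₃, i₄ ∉ A` such that `b i₃` and `b i₄` lie in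
different connected components of the complement of the union of the rays from
`p` through `b i₁` and through `b i₂`. -/
def Dangerous {k : ℕ} (b : Fin k → ℝ × ℝ) (A : Finset (Fin k)) (p : ℝ × ℝ) : Prop :=
  ∃ i₁ i₂ i₃ i₄ : Fin k, i₁ ∈ A ∧ i₂ ∈ A ∧ i₁ ≠ i₂ ∧ i₃ ∉ A ∧ i₄ ∉ A ∧ i₃ ≠ i₄ ∧
    b i₃ ∈ (Ray p (b i₁) ∪ Ray p (b i₂))ᶜ ∧
    b i₄ ∈ (Ray p (b i₁) ∪ Ray p (b i₂))ᶜ ∧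
    connectedComponentIn (Ray p (b i₁) ∪ Ray p (b i₂))ᶜ (b i₃) ≠
      connectedComponentIn (Ray p (b i₁) ∪ Ray p (b i₂))ᶜ (b i₄)

/-!
Write `p = v(r_A)` and `b_i = v(b_i)`. In the affine frame `(p; b₁ - p, b₂ - p)` the complement of
the two rays is the open wedge spanned by `b₁, b₂` together with the complement of the closed
wedge; both pieces are connected, so one of `b₃, b₄`, say `b₃`, lies in the open wedge and the
other outside the closed one. An obstacle blocking `p b₃` avoids the edges `p b₁, p b₂, b₁ b₃,
b₂ b₃`, which bound the quadrilateral `p b₁ b₃ b₂`, and it meets the diagonal `p b₃` in the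
interior of that quadrilateral; being connected, it stays inside, hence inside the closed wedge,
so it cannot meet the open segment `p b₄`. A single obstacle therefore cannot block both
non-edges `r_A b₃` and `r_A b₄`.
-/

open Topology

def cross (u v : ℝ × ℝ) : ℝ := u.1 * v.2 - u.2 * v.1

/-- Coordinates of `x - p` in the basis `(a - p, b - p)`, by Cramer's rule (junk `0` when `p, a, b`
are collinear). -/
noncomputable def baryFst (p a b x : ℝ × ℝ) : ℝ := cross (x - p) (b - p) / cross (a - p) (b - p)

noncomputable def barySnd (p a b x : ℝ × ℝ) : ℝ := cross (a - p) (x - p) / cross (a - p) (b - p)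

def wedge (p a b : ℝ × ℝ) : Set (ℝ × ℝ) := {x | 0 ≤ baryFst p a b x ∧ 0 ≤ barySnd p a b x}

def openWedge (p a b : ℝ × ℝ) : Set (ℝ × ℝ) := {x | 0 < baryFst p a b x ∧ 0 < barySnd p a b x}

def triangle (p a b : ℝ × ℝ) : Set (ℝ × ℝ) :=
  {x | 0 ≤ baryFst p a b x ∧ 0 ≤ barySnd p a b x ∧ baryFst p a b x + barySnd p a b x ≤ 1}

theorem cross_swap (u v : ℝ × ℝ) : cross v u = -cross u v := by
  simp only [cross]
  ring

theorem collinear_of_cross_eq_zero {p a b : ℝ × ℝ} (h : cross (a - p) (b - p) = 0) :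
    Collinear ℝ ({p, a, b} : Set (ℝ × ℝ)) := by
  rw [collinear_iff_of_mem (by simp : p ∈ ({p, a, b} : Set (ℝ × ℝ)))]
  by_cases hap : a = p
  · refine ⟨b - p, ?_⟩
    simp only [mem_insert_iff, mem_singleton_iff, forall_eq_or_imp, forall_eq, hap]
    exact ⟨⟨0, by simp⟩, ⟨0, by simp⟩, ⟨1, by simp⟩⟩
  · have hn : (a - p).1 ^ 2 + (a - p).2 ^ 2 ≠ 0 := by
      intro h0
      obtain ⟨h1, h2⟩ := (add_eq_zero_iff_of_nonneg (sq_nonneg _) (sq_nonneg _)).mp h0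
      exact hap (sub_eq_zero.mp (Prod.ext (pow_eq_zero_iff two_ne_zero |>.mp h1)
        (pow_eq_zero_iff two_ne_zero |>.mp h2)))
    refine ⟨a - p, ?_⟩
    simp only [mem_insert_iff, mem_singleton_iff, forall_eq_or_imp, forall_eq]
    refine ⟨⟨0, by simp⟩, ⟨1, by simp⟩, ⟨((a - p).1 * (b - p).1 + (a - p).2 * (b - p).2) /
      ((a - p).1 ^ 2 + (a - p).2 ^ 2), ?_⟩⟩
    rw [vadd_eq_add, ← sub_eq_iff_eq_add]
    simp only [cross] at h
    ext <;> simp only [Prod.smul_fst, Prod.smul_snd, smul_eq_mul] <;> field_simp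
    · linear_combination (-(a - p).2) * h
    · linear_combination (a - p).1 * h

theorem cross_ne_zero_of_not_collinear {p a b : ℝ × ℝ}
    (h : ¬ Collinear ℝ ({p, a, b} : Set (ℝ × ℝ))) : cross (a - p) (b - p) ≠ 0 :=
  mt collinear_of_cross_eq_zero h

theorem eq_smul_add_smul_of_cross_ne_zero {u v : ℝ × ℝ} (h : cross u v ≠ 0) (w : ℝ × ℝ) :
    w = (cross w v / cross u v) • u + (cross u w / cross u v) • v := by
  simp only [cross] at h ⊢
  ext <;> simp only [Prod.fst_add, Prod.snd_add, Prod.smul_fst, Prod.smul_snd, smul_eq_mul] <;>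
    rw [div_mul_eq_mul_div, div_mul_eq_mul_div, ← add_div, eq_div_iff h] <;> ring

section Coordinates

variable {p a b : ℝ × ℝ}

theorem barySnd_swap : barySnd p b a = baryFst p a b := by
  ext x
  simp only [baryFst, barySnd]
  rw [cross_swap (b - p), cross_swap (b - p), neg_div_neg_eq]

theorem baryFst_add_smul_sub (q : ℝ × ℝ) (s : ℝ) :
    baryFst p a b (p + s • (q - p)) = s * baryFst p a b q := by
  simp only [baryFst, cross, add_sub_cancel_left, Prod.smul_fst, Prod.smul_snd, smul_eq_mul]
  ring

theorem barySnd_add_smul_sub (q : ℝ × ℝ) (s : ℝ) :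
    barySnd p a b (p + s • (q - p)) = s * barySnd p a b q := by
  simp only [barySnd, cross, add_sub_cancel_left, Prod.smul_fst, Prod.smul_snd, smul_eq_mul]
  ring

theorem baryFst_add_smul_sub_add_smul_sub (q r : ℝ × ℝ) (s t : ℝ) :
    baryFst p a b (p + s • (q - p) + t • (r - p)) = s * baryFst p a b q + t * baryFst p a b r := by
  simp only [baryFst, cross, add_assoc, add_sub_cancel_left, Prod.fst_add, Prod.snd_add,
    Prod.smul_fst, Prod.smul_snd, smul_eq_mul]
  ring

theorem barySnd_add_smul_sub_add_smul_sub (q r : ℝ × ℝ) (s t : ℝ) :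
    barySnd p a b (p + s • (q - p) + t • (r - p)) = s * barySnd p a b q + t * barySnd p a b r := by
  simp only [barySnd, cross, add_assoc, add_sub_cancel_left, Prod.fst_add, Prod.snd_add,
    Prod.smul_fst, Prod.smul_snd, smul_eq_mul]
  ring

theorem baryFst_swap : baryFst p b a = barySnd p a b :=
  barySnd_swap.symm

theorem baryFst_right : baryFst p a b b = 0 := by simp [baryFst, cross, mul_comm]

theorem barySnd_left : barySnd p a b a = 0 := by simp [barySnd, cross, mul_comm]

theorem baryFst_left (hD : cross (a - p) (b - p) ≠ 0) : baryFst p a b a = 1 := div_self hD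

theorem barySnd_right (hD : cross (a - p) (b - p) ≠ 0) : barySnd p a b b = 1 := div_self hD

theorem baryFst_add_smul_add_smul (hD : cross (a - p) (b - p) ≠ 0) (s t : ℝ) :
    baryFst p a b (p + s • (a - p) + t • (b - p)) = s := by
  simp [baryFst_add_smul_sub_add_smul_sub, baryFst_left hD, baryFst_right]

theorem barySnd_add_smul_add_smul (hD : cross (a - p) (b - p) ≠ 0) (s t : ℝ) :
    barySnd p a b (p + s • (a - p) + t • (b - p)) = t := by
  simp [barySnd_add_smul_sub_add_smul_sub, barySnd_left, barySnd_right hD]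

theorem eq_add_baryFst_smul_add_barySnd_smul (hD : cross (a - p) (b - p) ≠ 0) (x : ℝ × ℝ) :
    x = p + baryFst p a b x • (a - p) + barySnd p a b x • (b - p) := by
  rw [add_assoc, ← sub_eq_iff_eq_add']
  exact eq_smul_add_smul_of_cross_ne_zero hD _

theorem continuous_baryFst : Continuous (baryFst p a b) := by
  unfold baryFst cross; fun_prop

theorem continuous_barySnd : Continuous (barySnd p a b) := by
  unfold barySnd cross; fun_prop

theorem convex_baryFst_preimage {I : Set ℝ} (hI : Convex ℝ I) :
    Convex ℝ (baryFst p a b ⁻¹' I) := by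
  intro x hx y hy s t hs ht hst
  have e : s • x + t • y = p + s • (x - p) + t • (y - p) := by
    obtain rfl : t = 1 - s := by linarith
    module
  rw [mem_preimage, e, baryFst_add_smul_sub_add_smul_sub]
  exact hI hx hy hs ht hst

theorem convex_barySnd_preimage {I : Set ℝ} (hI : Convex ℝ I) :
    Convex ℝ (barySnd p a b ⁻¹' I) := by
  rw [← baryFst_swap]
  exact convex_baryFst_preimage hI

end Coordinates

section Wedges

variable {p a b c : ℝ × ℝ}

theorem wedge_comm : wedge p b a = wedge p a b := by
  unfold wedge
  rw [baryFst_swap (a := a), barySnd_swap (a := a)]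
  ext x
  exact and_comm

theorem openWedge_subset_wedge : openWedge p a b ⊆ wedge p a b :=
  fun _ hx => ⟨hx.1.le, hx.2.le⟩

theorem ray_eq (hD : cross (a - p) (b - p) ≠ 0) :
    Ray p a = {x | 0 ≤ baryFst p a b x ∧ barySnd p a b x = 0} := by
  ext x
  constructor
  · rintro ⟨t, ht, rfl⟩
    simp [baryFst_add_smul_sub, barySnd_add_smul_sub, baryFst_left hD, barySnd_left, ht]
  · rintro ⟨h1, h2⟩
    refine ⟨baryFst p a b x, h1, ?_⟩
    conv_lhs => rw [eq_add_baryFst_smul_add_barySnd_smul hD x]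
    rw [h2, zero_smul, add_zero]

theorem compl_ray_union_ray (hD : cross (a - p) (b - p) ≠ 0) :
    (Ray p a ∪ Ray p b)ᶜ = openWedge p a b ∪ (wedge p a b)ᶜ := by
  have hD' : cross (b - p) (a - p) ≠ 0 := by rwa [cross_swap, neg_ne_zero]
  rw [ray_eq hD, ray_eq hD', baryFst_swap (a := a), barySnd_swap (a := a)]
  ext x
  simp only [openWedge, wedge, mem_union, mem_compl_iff, mem_ofPred_eq]
  generalize baryFst p a b x = f
  generalize barySnd p a b x = g
  grind

theorem isPreconnected_openWedge : IsPreconnected (openWedge p a b) :=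
  ((convex_baryFst_preimage (convex_Ioi 0)).inter
    (convex_barySnd_preimage (convex_Ioi 0))).isPreconnected

theorem isPreconnected_compl_wedge (hD : cross (a - p) (b - p) ≠ 0) :
    IsPreconnected (wedge p a b)ᶜ := by
  have e : (wedge p a b)ᶜ = baryFst p a b ⁻¹' Iio 0 ∪ barySnd p a b ⁻¹' Iio 0 := by
    ext x
    simp only [wedge, mem_compl_iff, mem_ofPred_eq, not_and_or, not_le, mem_union, mem_preimage,
      mem_Iio]
  rw [e]
  refine IsPreconnected.union (p + (-1 : ℝ) • (a - p) + (-1 : ℝ) • (b - p)) ?_ ?_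
    (convex_baryFst_preimage (convex_Iio 0)).isPreconnected
    (convex_barySnd_preimage (convex_Iio 0)).isPreconnected
  · rw [mem_preimage, baryFst_add_smul_add_smul hD, mem_Iio]; norm_num
  · rw [mem_preimage, barySnd_add_smul_add_smul hD, mem_Iio]; norm_num

theorem add_smul_sub_mem_wedge_iff {q : ℝ × ℝ} {s : ℝ} (hs : 0 < s) :
    p + s • (q - p) ∈ wedge p a b ↔ q ∈ wedge p a b := by
  simp only [wedge, mem_ofPred_eq, baryFst_add_smul_sub, barySnd_add_smul_sub,
    mul_nonneg_iff_of_pos_left hs]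

theorem openSegment_subset_compl_wedge {q : ℝ × ℝ} (hq : q ∉ wedge p a b) :
    openSegment ℝ p q ⊆ (wedge p a b)ᶜ := by
  rw [openSegment_eq_image']
  rintro _ ⟨s, hs, rfl⟩
  exact (add_smul_sub_mem_wedge_iff hs.1).not.mpr hq

theorem connectedComponentIn_compl_ray_union_ray_ne (hD : cross (a - p) (b - p) ≠ 0)
    {x y : ℝ × ℝ} (hx : x ∈ (Ray p a ∪ Ray p b)ᶜ) (hy : y ∈ (Ray p a ∪ Ray p b)ᶜ)
    (hxy : connectedComponentIn (Ray p a ∪ Ray p b)ᶜ x ≠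
      connectedComponentIn (Ray p a ∪ Ray p b)ᶜ y) :
    x ∈ openWedge p a b ∧ y ∉ wedge p a b ∨ y ∈ openWedge p a b ∧ x ∉ wedge p a b := by
  rw [compl_ray_union_ray hD] at hx hy hxy
  have same_piece : ∀ U ⊆ openWedge p a b ∪ (wedge p a b)ᶜ, IsPreconnected U → x ∈ U → y ∉ U :=
    fun U hsub hconn hxU hyU =>
      hxy (connectedComponentIn_eq (hconn.subset_connectedComponentIn hxU hsub hyU))
  rcases hx with hx | hx <;> rcases hy with hy | hy
  · exact absurd hy (same_piece _ subset_union_left isPreconnected_openWedge hx)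
  · exact Or.inl ⟨hx, hy⟩
  · exact Or.inr ⟨hy, hx⟩
  · exact absurd hy (same_piece _ subset_union_right (isPreconnected_compl_wedge hD) hx)

end Wedges

section Triangles

variable {p a b c : ℝ × ℝ}

theorem isClosed_triangle : IsClosed (triangle p a b) :=
  (isClosed_le continuous_const continuous_baryFst).inter
    ((isClosed_le continuous_const continuous_barySnd).inter
      (isClosed_le (continuous_baryFst.add continuous_barySnd) continuous_const))

theorem setOf_bary_pos_subset_interior_triangle :
    {x | 0 < baryFst p a b x ∧ 0 < barySnd p a b x ∧ baryFst p a b x + barySnd p a b x < 1} ⊆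
      interior (triangle p a b) :=
  interior_maximal (fun _ hx => ⟨hx.1.le, hx.2.1.le, hx.2.2.le⟩)
    ((isOpen_lt continuous_const continuous_baryFst).inter
      ((isOpen_lt continuous_const continuous_barySnd).inter
        (isOpen_lt (continuous_baryFst.add continuous_barySnd) continuous_const)))

theorem frontier_triangle_subset (hD : cross (a - p) (b - p) ≠ 0) :
    frontier (triangle p a b) ⊆ segment ℝ p a ∪ segment ℝ a b ∪ segment ℝ p b := by
  rw [isClosed_triangle.frontier_eq]
  rintro x ⟨hx, hint⟩
  obtain ⟨s, t, rfl⟩ : ∃ s t : ℝ, x = p + s • (a - p) + t • (b - p) :=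
    ⟨_, _, eq_add_baryFst_smul_add_barySnd_smul hD x⟩
  have hnot := mt (@setOf_bary_pos_subset_interior_triangle p a b _) hint
  simp only [triangle, mem_ofPred_eq, baryFst_add_smul_add_smul hD,
    barySnd_add_smul_add_smul hD] at hx hnot
  obtain ⟨hs, ht, hst⟩ := hx
  rw [segment_eq_image', segment_eq_image', segment_eq_image']
  rcases hs.eq_or_lt with rfl | hs
  · exact Or.inr ⟨t, ⟨ht, by linarith⟩, by module⟩
  rcases ht.eq_or_lt with rfl | ht
  · exact Or.inl (Or.inl ⟨s, ⟨hs.le, by linarith⟩, by module⟩)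
  obtain rfl : s = 1 - t := by
    have : ¬ s + t < 1 := fun h => hnot ⟨hs, ht, h⟩
    linarith
  exact Or.inl (Or.inr ⟨t, ⟨ht.le, by linarith⟩, by module⟩)

theorem triangle_subset_wedge (hD : cross (a - p) (b - p) ≠ 0) (hac : cross (a - p) (c - p) ≠ 0)
    (hc : c ∈ wedge p a b) : triangle p a c ⊆ wedge p a b := by
  intro x hx
  obtain ⟨s, t, rfl⟩ : ∃ s t : ℝ, x = p + s • (a - p) + t • (c - p) :=
    ⟨_, _, eq_add_baryFst_smul_add_barySnd_smul hac x⟩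
  simp only [triangle, mem_ofPred_eq, baryFst_add_smul_add_smul hac,
    barySnd_add_smul_add_smul hac] at hx
  simp only [wedge, mem_ofPred_eq, baryFst_add_smul_sub_add_smul_sub,
    barySnd_add_smul_sub_add_smul_sub, baryFst_left hD, barySnd_left]
  exact ⟨by nlinarith [hc.1], by nlinarith [hc.2]⟩

theorem baryFst_mul_baryFst_nonpos (h : cross (a - p) (c - p) * cross (b - p) (c - p) < 0)
    (x : ℝ × ℝ) : baryFst p a c x * baryFst p b c x ≤ 0 := by
  rw [baryFst, baryFst, div_mul_div_comm]
  exact div_nonpos_of_nonneg_of_nonpos (mul_self_nonneg _) h.le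

/-- `h` says that `a` and `b` lie strictly on opposite sides of the line `p c`. -/
theorem openSegment_subset_interior_triangle_union
    (h : cross (a - p) (c - p) * cross (b - p) (c - p) < 0) :
    openSegment ℝ p c ⊆ interior (triangle p a c ∪ triangle p b c) := by
  have hac : cross (a - p) (c - p) ≠ 0 := left_ne_zero_of_mul h.ne
  have hbc : cross (b - p) (c - p) ≠ 0 := right_ne_zero_of_mul h.ne
  rw [openSegment_eq_image']
  rintro _ ⟨t, ⟨ht0, ht1⟩, rfl⟩
  rw [mem_interior_iff_mem_nhds]
  have near : ∀ {a}, cross (a - p) (c - p) ≠ 0 → ∀ᶠ x in 𝓝 (p + t • (c - p)),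
      0 < barySnd p a c x ∧ baryFst p a c x + barySnd p a c x < 1 := by
    intro a had
    have h1 : baryFst p a c (p + t • (c - p)) = 0 := by
      rw [baryFst_add_smul_sub, baryFst_right, mul_zero]
    have h2 : barySnd p a c (p + t • (c - p)) = t := by
      rw [barySnd_add_smul_sub, barySnd_right had, mul_one]
    exact (continuousAt_const.eventually_lt continuous_barySnd.continuousAt (by rwa [h2])).and
      ((continuous_baryFst.add continuous_barySnd).continuousAt.eventually_lt continuousAt_const
        (by simpa [h1, h2] using ht1))
  filter_upwards [near hac, near hbc] with x ⟨hxa, hxa'⟩ ⟨hxb, hxb'⟩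
  rcases le_or_gt 0 (baryFst p a c x) with hf | hf
  · exact Or.inl ⟨hf, hxa.le, hxa'.le⟩
  · exact Or.inr ⟨nonneg_of_mul_nonpos_right (baryFst_mul_baryFst_nonpos h x) hf, hxb.le, hxb'.le⟩

end Triangles

theorem IsPreconnected.subset_interior_of_disjoint_frontier {X : Type*} [TopologicalSpace X]
    {s t : Set X} (hs : IsPreconnected s) (hst : Disjoint s (frontier t))
    (hne : (s ∩ interior t).Nonempty) : s ⊆ interior t := by
  refine hs.subset_left_of_subset_union isOpen_interior isClosed_closure.isOpen_compl
    (disjoint_compl_right.mono_left interior_subset_closure) (fun x hx => ?_) hne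
  by_cases hxt : x ∈ closure t
  · exact Or.inl (not_not.mp fun hi => hst.ne_of_mem hx ⟨hxt, hi⟩ rfl)
  · exact Or.inr hxt

section Quadrilateral

variable {p a b c : ℝ × ℝ}

theorem cross_mul_cross_neg_of_mem_openWedge (hD : cross (a - p) (b - p) ≠ 0)
    (hc : c ∈ openWedge p a b) : cross (a - p) (c - p) * cross (b - p) (c - p) < 0 := by
  have hac : cross (a - p) (c - p) = barySnd p a b c * cross (a - p) (b - p) :=
    (div_mul_cancel₀ _ hD).symm
  have hbc : cross (b - p) (c - p) = -(baryFst p a b c * cross (a - p) (b - p)) := by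
    rw [baryFst, div_mul_cancel₀ _ hD, cross_swap]
  rw [hac, hbc]
  nlinarith [mul_pos (mul_pos hc.1 hc.2) (sq_pos_of_ne_zero hD)]

theorem frontier_triangle_union_subset
    (h : cross (a - p) (c - p) * cross (b - p) (c - p) < 0) :
    frontier (triangle p a c ∪ triangle p b c) ⊆
      segment ℝ p a ∪ segment ℝ p b ∪ segment ℝ a c ∪ segment ℝ b c := by
  intro z hz
  have hpc : z ∈ segment ℝ p c → z ∈ segment ℝ p a ∨ z ∈ segment ℝ a c := by
    rw [← insert_endpoints_openSegment]
    rintro (rfl | rfl | hz')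
    · exact Or.inl (left_mem_segment ℝ _ _)
    · exact Or.inr (right_mem_segment ℝ _ _)
    · exact absurd (openSegment_subset_interior_triangle_union h hz') hz.2
  have hedges := (frontier_union_subset _ _ hz).imp
    (fun h' => frontier_triangle_subset (left_ne_zero_of_mul h.ne) h'.1)
    (fun h' => frontier_triangle_subset (right_ne_zero_of_mul h.ne) h'.2)
  simp only [mem_union] at hedges hpc ⊢
  tauto

theorem IsPreconnected.subset_wedge {O : Set (ℝ × ℝ)} (hO : IsPreconnected O)
    (hD : cross (a - p) (b - p) ≠ 0) (hc : c ∈ openWedge p a b)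
    (hpa : Disjoint O (segment ℝ p a)) (hpb : Disjoint O (segment ℝ p b))
    (hac : Disjoint O (segment ℝ a c)) (hbc : Disjoint O (segment ℝ b c))
    (hOc : (O ∩ openSegment ℝ p c).Nonempty) : O ⊆ wedge p a b := by
  have h := cross_mul_cross_neg_of_mem_openWedge hD hc
  have hO' : O ⊆ interior (triangle p a c ∪ triangle p b c) :=
    hO.subset_interior_of_disjoint_frontier
      ((disjoint_union_right.2 ⟨disjoint_union_right.2 ⟨disjoint_union_right.2 ⟨hpa, hpb⟩, hac⟩,
        hbc⟩).mono_right (frontier_triangle_union_subset h))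
      (hOc.mono (inter_subset_inter_right _ (openSegment_subset_interior_triangle_union h)))
  have hD' : cross (b - p) (a - p) ≠ 0 := by rwa [cross_swap, neg_ne_zero]
  refine hO'.trans (interior_subset.trans (union_subset ?_ ?_))
  · exact triangle_subset_wedge hD (left_ne_zero_of_mul h.ne) (openWedge_subset_wedge hc)
  · rw [← wedge_comm]
    exact triangle_subset_wedge hD' (right_ne_zero_of_mul h.ne)
      (wedge_comm ▸ openWedge_subset_wedge hc)

end Quadrilateral

theorem ObstacleRep.obs_subset_wedge {k h : ℕ} (rep : ObstacleRep (CE k) h)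
    {A : Finset (Fin k)} {i₁ i₂ j : Fin k} (h₁ : i₁ ∈ A) (h₂ : i₂ ∈ A) (h₁₂ : i₁ ≠ i₂) (hj : j ∉ A)
    (hjw : rep.v (.inl j) ∈ openWedge (rep.v (.inr A)) (rep.v (.inl i₁)) (rep.v (.inl i₂)))
    {o : Fin h} (ho : (rep.obs o ∩ openSegment ℝ (rep.v (.inr A)) (rep.v (.inl j))).Nonempty) :
    rep.obs o ⊆ wedge (rep.v (.inr A)) (rep.v (.inl i₁)) (rep.v (.inl i₂)) := by
  have hD := cross_ne_zero_of_not_collinear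
    (rep.genpos (.inr A) (.inl i₁) (.inl i₂) (by simp) (by simp) (by simpa using h₁₂))
  have edge : ∀ {x y}, (CE k).Adj x y → Disjoint (rep.obs o) (segment ℝ (rep.v x) (rep.v y)) :=
    rep.obs_avoid_edges o _ _
  exact (rep.obs_connected o).isPreconnected.subset_wedge hD hjw
    (edge (x := .inr A) h₁) (edge (x := .inr A) h₂)
    (edge (x := .inl i₁) (y := .inl j) fun e => hj (e ▸ h₁))
    (edge (x := .inl i₂) (y := .inl j) fun e => hj (e ▸ h₂)) ho

theorem ce_dangerous_needs_two_obstacles_general (k h : ℕ)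
    (rep : ObstacleRep (CE k) h) (A : Finset (Fin k))
    (hd : Dangerous (fun i => rep.v (Sum.inl i)) A (rep.v (Sum.inr A))) :
    2 ≤ h := by
  obtain ⟨i₁, i₂, i₃, i₄, h₁, h₂, h₁₂, h₃, h₄, -, hc₃, hc₄, hcc⟩ := hd
  by_contra! hh
  have : Subsingleton (Fin h) := Fin.subsingleton_iff_le_one.2 (by omega)
  have hD := cross_ne_zero_of_not_collinear
    (rep.genpos (.inr A) (.inl i₁) (.inl i₂) (by simp) (by simp) (by simpa using h₁₂))
  have separated : ∀ {j j'}, j ∉ A → j' ∉ A →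
      rep.v (.inl j) ∈ openWedge (rep.v (.inr A)) (rep.v (.inl i₁)) (rep.v (.inl i₂)) →
      rep.v (.inl j') ∉ wedge (rep.v (.inr A)) (rep.v (.inl i₁)) (rep.v (.inl i₂)) → False := by
    intro j j' hj hj' hw hw'
    obtain ⟨o, ho⟩ := rep.blocks (.inr A) (.inl j) (by simp) hj
    obtain ⟨o', x, hxo, hx⟩ := rep.blocks (.inr A) (.inl j') (by simp) hj'
    rw [Subsingleton.elim o' o] at hxo
    exact openSegment_subset_compl_wedge hw' hx (rep.obs_subset_wedge h₁ h₂ h₁₂ hj hw ho hxo)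
  rcases connectedComponentIn_compl_ray_union_ray_ne hD hc₃ hc₄ hcc with ⟨h3, h4⟩ | ⟨h4, h3⟩
  · exact separated h₃ h₄ h3 h4
  · exact separated h₄ h₃ h4 h3

/-- for `k ≥ 4`, in any `h`-obstacle representation of `CE(k)` in which
some `r_A` is dangerous for `A` with respect to the points `b_1, …, b_k`, we have `h ≥ 2`. -/
theorem ce_dangerous_needs_two_obstacles (k h : ℕ) (hk : 4 ≤ k)
    (rep : ObstacleRep (CE k) h) (A : Finset (Fin k))
    (hd : Dangerous (fun i => rep.v (Sum.inl i)) A (rep.v (Sum.inr A))) :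
    2 ≤ h :=
  ce_dangerous_needs_two_obstacles_general k h rep A hd
end
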